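/- Let h(p) := p·log p + (1−p)·log(1−p) for p ∈ (0,1), with h(0) = h(1) = 0, and for kernels W with 0 ≤ W ≤ 1 a.e. define E(W) := ∫_{[0,1]²} h(W(x,y)) dx dy. Then E is 4-semiconvex with respect to the L² metric on kernels: for all kernels W₀, W₁ with 0 ≤ W₀, W₁ ≤ 1 a.e. and all t ∈ [0,1], E((1−t)W₀ + tW₁) ≤ (1−t)E(W₀) + tE(W₁) − 2t(1−t)‖W₀ − W₁‖_{L²}². Consequently the scalar entropy 𝓔([W]) := E(W) is 4-semiconvex with respect to δ₂ along every generalized geodesic of (𝒲̂, δ₂). -/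

import Mathlib

open MeasureTheory Filter Function
open scoped Classical BigOperators

noncomputable section

/-- The unit interval `[0,1] ⊆ ℝ`. -/
def I01 : Set ℝ := Set.Icc 0 1

/-- The unit square `[0,1]²`. -/
def sq01 : Set (ℝ × ℝ) := I01 ×ˢ I01

/-- Lebesgue measure restricted to the unit square. -/
def μsq : Measure (ℝ × ℝ) := volume.restrict sq01

/-- A kernel: a Borel measurable symmetric function with values in `[-1,1]`. -/
def IsKernel (W : ℝ → ℝ → ℝ) : Prop :=
  Measurable (uncurry W) ∧ (∀ x y, W x y = W y x) ∧ ∀ x y, W x y ∈ Set.Icc (-1 : ℝ) 1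

/-- A Lebesgue measure preserving transformation of `[0,1]`. -/
def IsMP (φ : ℝ → ℝ) : Prop :=
  Set.MapsTo φ I01 I01 ∧
    MeasurePreserving φ (volume.restrict I01) (volume.restrict I01)

/-- The pullback `W^φ` of a kernel along a map of `[0,1]`. -/
def pull (W : ℝ → ℝ → ℝ) (φ : ℝ → ℝ) : ℝ → ℝ → ℝ := fun x y => W (φ x) (φ y)

/-- The `L²` norm on the unit square. -/
def l2norm (W : ℝ → ℝ → ℝ) : ℝ := Real.sqrt (∫ p, (W p.1 p.2) ^ 2 ∂μsq)

/-- The `L²` distance on the unit square. -/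
def d2 (U V : ℝ → ℝ → ℝ) : ℝ := l2norm fun x y => U x y - V x y

/-- The `L²` inner product on the unit square. -/
def inner2 (U V : ℝ → ℝ → ℝ) : ℝ := ∫ p, U p.1 p.2 * V p.1 p.2 ∂μsq

/-- The cut norm of a kernel. -/
def cutNorm (W : ℝ → ℝ → ℝ) : ℝ :=
  sSup {r | ∃ S T : Set ℝ, MeasurableSet S ∧ MeasurableSet T ∧ S ⊆ I01 ∧ T ⊆ I01 ∧
    r = |∫ p in S ×ˢ T, W p.1 p.2|}

/-- The invariant `L²` (pseudo)metric `δ₂` between (representatives of) graphons. -/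
def delta2 (U V : ℝ → ℝ → ℝ) : ℝ :=
  sInf {r | ∃ φ ψ, IsMP φ ∧ IsMP ψ ∧ r = d2 (pull U φ) (pull V ψ)}

/-- The cut (pseudo)metric `δ_□` between (representatives of) graphons. -/
def deltaCut (U V : ℝ → ℝ → ℝ) : ℝ :=
  sInf {r | ∃ φ ψ, IsMP φ ∧ IsMP ψ ∧
    r = cutNorm fun x y => pull U φ x y - pull V ψ x y}

/-- Almost everywhere equality on the unit square. -/
def AEEqSq (U V : ℝ → ℝ → ℝ) : Prop := ∀ᵐ p ∂μsq, U p.1 p.2 = V p.1 p.2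

/-- Weak isomorphism of kernels. A graphon is a weak isomorphism class of kernels;
`WeakIso U V` says that `U` and `V` represent the same graphon `[U] = [V]`. -/
def WeakIso (U V : ℝ → ℝ → ℝ) : Prop :=
  ∃ W φ ψ, IsKernel W ∧ IsMP φ ∧ IsMP ψ ∧ AEEqSq U (pull W φ) ∧ AEEqSq V (pull W ψ)

/-- A function `F : 𝒲̂ → ℝ ∪ {+∞}` on graphons, encoded as a weak-isomorphism invariant
`EReal`-valued function on kernels never taking the value `⊥`. -/
def GraphonFun (F : (ℝ → ℝ → ℝ) → EReal) : Prop :=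
  (∀ W, F W ≠ ⊥) ∧ ∀ U V, IsKernel U → IsKernel V → WeakIso U V → F U = F V

/-- An absolutely continuous curve on `[a,b]` with respect to a (pseudo)distance `d`. -/
def IsACCurve {α : Type*} (d : α → α → ℝ) (a b : ℝ) (ω : ℝ → α) : Prop :=
  ∃ m : ℝ → ℝ, IntegrableOn m (Set.Icc a b) ∧
    ∀ r s, a ≤ r → r < s → s ≤ b → d (ω r) (ω s) ≤ ∫ t in r..s, m t

/-- The metric derivative of a curve at `t` equals `L`. -/
def HasMetricDeriv {α : Type*} (d : α → α → ℝ) (ω : ℝ → α) (t L : ℝ) : Prop :=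
  Tendsto (fun s => d (ω s) (ω t) / |s - t|) (nhdsWithin t {t}ᶜ) (nhds L)

/-- The filter of kernels `W` with `0 < δ₂(W,V) → 0`, used to define the local slope. -/
def slopeNbhd (V : ℝ → ℝ → ℝ) : Filter (ℝ → ℝ → ℝ) :=
  ⨅ ε ∈ Set.Ioi (0 : ℝ), 𝓟 {W | IsKernel W ∧ 0 < delta2 W V ∧ delta2 W V < ε}

/-- The local slope `|∂F|([V]) = limsup_{δ₂([W],[V])→0} (F([V])-F([W]))⁺/δ₂([W],[V])`. -/
def localSlope (F : (ℝ → ℝ → ℝ) → EReal) (V : ℝ → ℝ → ℝ) : EReal :=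
  Filter.limsup
    (fun W => ((max ((F V - F W).toReal) 0 / delta2 W V : ℝ) : EReal)) (slopeNbhd V)

/-- The penalized functional `Φ_F(τ,[U];[V]) = F([V]) + δ₂²([V],[U])/(2τ)`. -/
def Phi (F : (ℝ → ℝ → ℝ) → EReal) (τ : ℝ) (U V : ℝ → ℝ → ℝ) : EReal :=
  F V + ((delta2 V U ^ 2 / (2 * τ) : ℝ) : EReal)

/-- `V` minimizes `Φ_F(τ,U;·)` over the class `C` of kernels. -/
def MinimizesPhi (F : (ℝ → ℝ → ℝ) → EReal) (C : (ℝ → ℝ → ℝ) → Prop)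
    (τ : ℝ) (U V : ℝ → ℝ → ℝ) : Prop :=
  C V ∧ ∀ V', C V' → Phi F τ U V ≤ Phi F τ U V'

/-- The interval `Q_{k,i}` of the equipartition of `[0,1]` into `k` intervals. -/
def Qblock (k i : ℕ) : Set ℝ :=
  if i = 1 then Set.Icc 0 (1 / (k : ℝ))
  else Set.Ioc (((i - 1 : ℕ) : ℝ) / (k : ℝ)) ((i : ℝ) / (k : ℝ))

/-- A `k`-block kernel: an element of `𝒲_k`, i.e. a kernel a.e. constant on each block
`Q_{k,i} × Q_{k,j}`. -/
def IsBlockKernel (k : ℕ) (W : ℝ → ℝ → ℝ) : Prop :=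
  IsKernel W ∧ ∀ i ∈ Finset.Icc 1 k, ∀ j ∈ Finset.Icc 1 k,
    ∃ c : ℝ, ∀ᵐ p ∂(volume.restrict (Qblock k i ×ˢ Qblock k j)), W p.1 p.2 = c

/-- `F` is `λ`-semiconvex along the curve `ω` with respect to `δ₂`. -/
def SemiconvexAlong (F : (ℝ → ℝ → ℝ) → EReal) (lam : ℝ) (ω : ℝ → ℝ → ℝ → ℝ) : Prop :=
  ∀ t ∈ Set.Icc (0 : ℝ) 1,
    F (ω t) ≤ ((1 - t : ℝ) : EReal) * F (ω 0) + ((t : ℝ) : EReal) * F (ω 1) -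
      ((lam / 2 * t * (1 - t) * delta2 (ω 0) (ω 1) ^ 2 : ℝ) : EReal)

/-- A generalized geodesic in `(𝒲̂, δ₂)` (represented by a curve of kernels). -/
def IsGenGeodesic (ω : ℝ → ℝ → ℝ → ℝ) : Prop :=
  ∃ W W₀ W₁ : ℝ → ℝ → ℝ, ∃ φ φ₀ φ₁ : ℝ → ℝ,
    IsKernel W ∧ IsKernel W₀ ∧ IsKernel W₁ ∧
    IsMP φ ∧ IsMP φ₀ ∧ IsMP φ₁ ∧
    delta2 W W₀ = d2 (pull W φ) (pull W₀ φ₀) ∧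
    delta2 W W₁ = d2 (pull W φ) (pull W₁ φ₁) ∧
    ∀ t x y, ω t x y = (1 - t) * pull W₀ φ₀ x y + t * pull W₁ φ₁ x y

/-- Sequential continuity of `F` with respect to the cut metric. -/
def CutContinuous (F : (ℝ → ℝ → ℝ) → EReal) : Prop :=
  ∀ V, IsKernel V → ∀ s : ℕ → ℝ → ℝ → ℝ, (∀ n, IsKernel (s n)) →
    Tendsto (fun n => deltaCut (s n) V) atTop (nhds 0) →
    Tendsto (fun n => F (s n)) atTop (nhds (F V))

/-- `φ` is the Fréchet-like derivative of `f` at `V`, relative to the class `C` of kernels: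
a bounded measurable symmetric function with
`(f(W) - f(V) - ⟨φ, W - V⟩)/‖W - V‖₂ → 0` as `‖W - V‖₂ → 0` over `W ∈ C`. -/
def IsFrechetDerivOn (C : (ℝ → ℝ → ℝ) → Prop) (f : (ℝ → ℝ → ℝ) → EReal)
    (V φ : ℝ → ℝ → ℝ) : Prop :=
  (∀ x y, φ x y = φ y x) ∧ Measurable (uncurry φ) ∧ (∃ c : ℝ, ∀ x y, |φ x y| ≤ c) ∧
  ∀ ε > (0 : ℝ), ∃ δ > (0 : ℝ), ∀ W, C W → d2 W V < δ →
    ∃ fW fV : ℝ, f W = (fW : EReal) ∧ f V = (fV : EReal) ∧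
      |fW - fV - inner2 φ (fun x y => W x y - V x y)| ≤ ε * d2 W V

/-- `φ` is the Fréchet-like derivative of `f` at `V` (over all kernels `𝒲`). -/
def IsFrechetDeriv (f : (ℝ → ℝ → ℝ) → EReal) (V φ : ℝ → ℝ → ℝ) : Prop :=
  IsFrechetDerivOn IsKernel f V φ

/-- The set `G_V = {|V| < 1} ∪ {V = 1, φ > 0} ∪ {V = -1, φ < 0}`. -/
def Gset (V φ : ℝ → ℝ → ℝ) : Set (ℝ × ℝ) :=
  {p | |V p.1 p.2| < 1 ∨ (V p.1 p.2 = 1 ∧ 0 < φ p.1 p.2) ∨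
    (V p.1 p.2 = -1 ∧ φ p.1 p.2 < 0)}

/-- A curve of maximal slope for `F` with respect to the local slope `|∂F|` on `(𝒲̂, δ₂)`,
on the time interval `[0,T]`, represented by a curve of kernels. -/
def IsMaxSlopeCurve (F : (ℝ → ℝ → ℝ) → EReal) (T : ℝ) (ω : ℝ → ℝ → ℝ → ℝ) : Prop :=
  IsACCurve delta2 0 T ω ∧
  ∃ G : ℝ → ℝ, AntitoneOn G (Set.Ioo 0 T) ∧
    (∀ᵐ t ∂(volume.restrict (Set.Ioo 0 T)), F (ω t) = ((G t : ℝ) : EReal)) ∧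
    ∀ᵐ t ∂(volume.restrict (Set.Ioo 0 T)), ∃ g L : ℝ,
      HasDerivAt G g t ∧ HasMetricDeriv delta2 ω t L ∧
      (g : EReal) ≤ ((-(L ^ 2) / 2 : ℝ) : EReal) -
        (((1 : ℝ) / 2 : ℝ) : EReal) * (localSlope F (ω t) * localSlope F (ω t))

/-- The strong `L²` derivative of a curve of kernels at time `t`. -/
def HasL2Deriv (W : ℝ → ℝ → ℝ → ℝ) (t : ℝ) (V : ℝ → ℝ → ℝ) : Prop :=
  Tendsto (fun s => d2 (fun x y => (W s x y - W t x y) / (s - t)) V)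
    (nhdsWithin t {t}ᶜ) (nhds 0)


/-- The scalar entropy function `h(p) = p log p + (1-p) log(1-p)` on `(0,1)`, with
`h(0) = h(1) = 0`. -/
def hEnt (p : ℝ) : ℝ :=
  if 0 < p ∧ p < 1 then p * Real.log p + (1 - p) * Real.log (1 - p) else 0

/-- `E(W) = ∫_{[0,1]²} h(W(x,y)) dx dy` for kernels with values in `[0,1]`. -/
def entE (W : ℝ → ℝ → ℝ) : ℝ := ∫ p, hEnt (W p.1 p.2) ∂μsq

/-- The scalar entropy `𝓔` as an `ℝ ∪ {+∞}`-valued function on kernels, equal to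
`E(W)` when `0 ≤ W ≤ 1` a.e. and `+∞` otherwise. -/
def EntFun : (ℝ → ℝ → ℝ) → EReal := fun W =>
  if ∀ᵐ p ∂μsq, W p.1 p.2 ∈ Set.Icc (0 : ℝ) 1 then ((entE W : ℝ) : EReal) else ⊤


section Aux

def gEnt (p : ℝ) : ℝ := p * Real.log p + (1 - p) * Real.log (1 - p) - 2 * p ^ 2
def gEnt' (p : ℝ) : ℝ := Real.log p - Real.log (1 - p) - 4 * p

lemma hasDerivAt_gEnt {x : ℝ} (hx : x ∈ Set.Ioo (0:ℝ) 1) : HasDerivAt gEnt (gEnt' x) x := by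
  obtain ⟨h0, h1⟩ := hx
  have h1x : (1:ℝ) - x ≠ 0 := by linarith
  have d1 : HasDerivAt (fun p : ℝ => p * Real.log p) (Real.log x + 1) x :=
    Real.hasDerivAt_mul_log h0.ne'
  have d2 : HasDerivAt (fun p : ℝ => (1 - p) * Real.log (1 - p))
      ((Real.log (1 - x) + 1) * (-1)) x := by
    have := (Real.hasDerivAt_mul_log h1x).comp x
      ((hasDerivAt_id x).const_sub (1:ℝ))
    simpa [Function.comp_def] using this
  have d3 : HasDerivAt (fun p : ℝ => 2 * p ^ 2) (2 * (2 * x)) x := by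
    simpa using ((hasDerivAt_pow 2 x).const_mul (2:ℝ))
  have := (d1.add d2).sub d3
  exact this.congr_deriv (by unfold gEnt'; ring)

lemma hasDerivAt_gEnt' {x : ℝ} (hx : x ∈ Set.Ioo (0:ℝ) 1) :
    HasDerivAt gEnt' (x⁻¹ + (1 - x)⁻¹ - 4) x := by
  obtain ⟨h0, h1⟩ := hx
  have h1x : (1:ℝ) - x ≠ 0 := by linarith
  have d1 : HasDerivAt Real.log x⁻¹ x := Real.hasDerivAt_log h0.ne'
  have d2 : HasDerivAt (fun p : ℝ => Real.log (1 - p)) ((1 - x)⁻¹ * (-1)) x := by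
    have := (Real.hasDerivAt_log h1x).comp x ((hasDerivAt_id x).const_sub (1:ℝ))
    simpa [Function.comp_def] using this
  have d3 : HasDerivAt (fun p : ℝ => 4 * p) 4 x := by
    simpa using (hasDerivAt_id x).const_mul (4:ℝ)
  have := (d1.sub d2).sub d3
  exact this.congr_deriv (by ring)

lemma continuous_gEnt : Continuous gEnt := by
  have h1 : Continuous fun p : ℝ => p * Real.log p := Real.continuous_mul_log
  have h2 : Continuous fun p : ℝ => (1 - p) * Real.log (1 - p) :=
    h1.comp (continuous_const.sub continuous_id)
  exact (h1.add h2).sub (continuous_const.mul (continuous_pow 2))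

lemma convexOn_gEnt : ConvexOn ℝ (Set.Icc (0:ℝ) 1) gEnt := by
  have hint : interior (Set.Icc (0:ℝ) 1) = Set.Ioo 0 1 := interior_Icc
  have hmono : MonotoneOn gEnt' (Set.Ioo (0:ℝ) 1) := by
    apply monotoneOn_of_deriv_nonneg (convex_Ioo 0 1)
    · exact fun x hx => (hasDerivAt_gEnt' hx).continuousAt.continuousWithinAt
    · rw [interior_Ioo]
      exact fun x hx => (hasDerivAt_gEnt' hx).differentiableAt.differentiableWithinAt
    · rw [interior_Ioo]
      intro x hx
      rw [(hasDerivAt_gEnt' hx).deriv]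
      obtain ⟨h0, h1⟩ := hx
      have hx1 : (0:ℝ) < 1 - x := by linarith
      have key : (4:ℝ) ≤ x⁻¹ + (1 - x)⁻¹ := by
        rw [inv_eq_one_div, inv_eq_one_div, div_add_div _ _ h0.ne' hx1.ne',
          le_div_iff₀ (mul_pos h0 hx1)]
        nlinarith [sq_nonneg (2*x-1)]
      linarith
  apply MonotoneOn.convexOn_of_deriv (convex_Icc 0 1) continuous_gEnt.continuousOn
  · rw [hint]
    exact fun x hx => (hasDerivAt_gEnt hx).differentiableAt.differentiableWithinAt
  · rw [hint]
    intro x hx y hy hxy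
    rw [(hasDerivAt_gEnt hx).deriv, (hasDerivAt_gEnt hy).deriv]
    exact hmono hx hy hxy

lemma hEnt_eq {p : ℝ} (hp : p ∈ Set.Icc (0:ℝ) 1) :
    hEnt p = p * Real.log p + (1 - p) * Real.log (1 - p) := by
  unfold hEnt
  split_ifs with h
  · rfl
  · obtain ⟨h0, h1⟩ := hp
    rcases eq_or_lt_of_le h0 with h0 | h0
    · simp [← h0]
    rcases eq_or_lt_of_le h1 with h1 | h1
    · simp [h1]
    exact absurd ⟨h0, h1⟩ h

lemma hEnt_abs_le (p : ℝ) : |hEnt p| ≤ 2 := by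
  unfold hEnt
  split_ifs with h
  · obtain ⟨h0, h1⟩ := h
    have h1x : (0:ℝ) < 1 - p := by linarith
    have l1 : Real.log p < 0 := Real.log_neg h0 h1
    have l2 : Real.log (1 - p) < 0 := Real.log_neg h1x (by linarith)
    have e1 : -Real.log p ≤ p⁻¹ - 1 := by
      rw [← Real.log_inv]
      exact Real.log_le_sub_one_of_pos (inv_pos.2 h0)
    have e2 : -Real.log (1 - p) ≤ (1 - p)⁻¹ - 1 := by
      rw [← Real.log_inv]
      exact Real.log_le_sub_one_of_pos (inv_pos.2 h1x)
    have c1 : p * p⁻¹ = 1 := mul_inv_cancel₀ h0.ne'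
    have c2 : (1 - p) * (1 - p)⁻¹ = 1 := mul_inv_cancel₀ h1x.ne'
    have m1 := mul_le_mul_of_nonneg_left e1 h0.le
    have m2 := mul_le_mul_of_nonneg_left e2 h1x.le
    rw [abs_le]
    constructor <;> nlinarith
  · norm_num

lemma measurable_hEnt : Measurable hEnt := by
  unfold hEnt
  refine Measurable.ite ?_ ?_ measurable_const
  · exact (measurableSet_Ioo : MeasurableSet (Set.Ioo (0:ℝ) 1))
  · exact (measurable_id.mul Real.measurable_log).add
      ((measurable_const.sub measurable_id).mul
        (Real.measurable_log.comp (measurable_const.sub measurable_id)))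

lemma hEnt_strong {a b t : ℝ} (ha : a ∈ Set.Icc (0:ℝ) 1) (hb : b ∈ Set.Icc (0:ℝ) 1)
    (ht : t ∈ Set.Icc (0:ℝ) 1) :
    hEnt ((1 - t) * a + t * b) ≤
      (1 - t) * hEnt a + t * hEnt b - 2 * t * (1 - t) * (a - b) ^ 2 := by
  obtain ⟨ha0, ha1⟩ := ha
  obtain ⟨hb0, hb1⟩ := hb
  obtain ⟨ht0, ht1⟩ := ht
  have hm : (1 - t) * a + t * b ∈ Set.Icc (0:ℝ) 1 := by
    constructor <;> nlinarith
  have hcv := convexOn_gEnt.2 ⟨ha0, ha1⟩ ⟨hb0, hb1⟩ (by linarith : (0:ℝ) ≤ 1 - t) ht0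
    (by ring : (1 - t) + t = 1)
  simp only [smul_eq_mul] at hcv
  have ga : gEnt a = hEnt a - 2 * a ^ 2 := by unfold gEnt; rw [hEnt_eq ⟨ha0, ha1⟩]
  have gb : gEnt b = hEnt b - 2 * b ^ 2 := by unfold gEnt; rw [hEnt_eq ⟨hb0, hb1⟩]
  have gm : gEnt ((1 - t) * a + t * b) = hEnt ((1 - t) * a + t * b)
      - 2 * ((1 - t) * a + t * b) ^ 2 := by unfold gEnt; rw [hEnt_eq hm]
  rw [ga, gb, gm] at hcv
  nlinarith [hcv]

instance : IsFiniteMeasure μsq := by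
  constructor
  unfold μsq sq01 I01
  rw [Measure.restrict_apply_univ, Measure.volume_eq_prod, Measure.prod_prod, Real.volume_Icc]
  norm_num

lemma d2_nonneg (U V : ℝ → ℝ → ℝ) : 0 ≤ d2 U V := Real.sqrt_nonneg _

lemma isMP_id : IsMP id := ⟨fun x h => h, MeasurePreserving.id _⟩

lemma delta2_le_d2 (U V : ℝ → ℝ → ℝ) : delta2 U V ≤ d2 U V := by
  apply csInf_le
  · exact ⟨0, fun r ⟨φ, ψ, _, _, hr⟩ => hr ▸ Real.sqrt_nonneg _⟩
  · exact ⟨id, id, isMP_id, isMP_id, rfl⟩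

lemma delta2_nonneg (U V : ℝ → ℝ → ℝ) : 0 ≤ delta2 U V := by
  apply le_csInf
  · exact ⟨d2 U V, id, id, isMP_id, isMP_id, rfl⟩
  · rintro r ⟨φ, ψ, _, _, hr⟩
    exact hr ▸ Real.sqrt_nonneg _

lemma isKernel_pull {W : ℝ → ℝ → ℝ} {φ : ℝ → ℝ} (hW : IsKernel W) (hφ : IsMP φ) :
    IsKernel (pull W φ) := by
  refine ⟨?_, fun x y => hW.2.1 _ _, fun x y => hW.2.2 _ _⟩
  exact hW.1.comp ((hφ.2.measurable.comp measurable_fst).prodMk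
    (hφ.2.measurable.comp measurable_snd))

lemma integrable_of_bdd {f : ℝ × ℝ → ℝ} (C : ℝ) (mf : Measurable f)
    (hb : ∀ p, |f p| ≤ C) : Integrable f μsq :=
  (integrable_const C).mono' mf.aestronglyMeasurable
    (Eventually.of_forall fun p => by simpa [Real.norm_eq_abs] using hb p)

lemma entE_sc (W₀ W₁ : ℝ → ℝ → ℝ) (h₀ : IsKernel W₀) (h₁ : IsKernel W₁)
    (a₀ : ∀ᵐ p ∂μsq, W₀ p.1 p.2 ∈ Set.Icc (0 : ℝ) 1)
    (a₁ : ∀ᵐ p ∂μsq, W₁ p.1 p.2 ∈ Set.Icc (0 : ℝ) 1)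
    (t : ℝ) (ht : t ∈ Set.Icc (0:ℝ) 1) :
    entE (fun x y => (1 - t) * W₀ x y + t * W₁ x y) ≤
      (1 - t) * entE W₀ + t * entE W₁ - 2 * t * (1 - t) * d2 W₀ W₁ ^ 2 := by
  have m0 : Measurable fun p : ℝ × ℝ => W₀ p.1 p.2 := h₀.1
  have m1 : Measurable fun p : ℝ × ℝ => W₁ p.1 p.2 := h₁.1
  have i0 : Integrable (fun p : ℝ × ℝ => hEnt (W₀ p.1 p.2)) μsq :=
    integrable_of_bdd 2 (measurable_hEnt.comp m0) fun p => hEnt_abs_le _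
  have i1 : Integrable (fun p : ℝ × ℝ => hEnt (W₁ p.1 p.2)) μsq :=
    integrable_of_bdd 2 (measurable_hEnt.comp m1) fun p => hEnt_abs_le _
  have mK : Measurable fun p : ℝ × ℝ => (1 - t) * W₀ p.1 p.2 + t * W₁ p.1 p.2 :=
    (m0.const_mul _).add (m1.const_mul _)
  have iK : Integrable (fun p : ℝ × ℝ => hEnt ((1 - t) * W₀ p.1 p.2 + t * W₁ p.1 p.2)) μsq :=
    integrable_of_bdd 2 (measurable_hEnt.comp mK) fun p => hEnt_abs_le _
  have iSq : Integrable (fun p : ℝ × ℝ => (W₀ p.1 p.2 - W₁ p.1 p.2) ^ 2) μsq := by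
    refine integrable_of_bdd 4 ((m0.sub m1).pow_const 2) fun p => ?_
    obtain ⟨u1, u2⟩ := h₀.2.2 p.1 p.2
    obtain ⟨v1, v2⟩ := h₁.2.2 p.1 p.2
    rw [abs_le]
    constructor <;> nlinarith
  have i0m : Integrable (fun p : ℝ × ℝ => (1 - t) * hEnt (W₀ p.1 p.2)) μsq := i0.const_mul _
  have i1m : Integrable (fun p : ℝ × ℝ => t * hEnt (W₁ p.1 p.2)) μsq := i1.const_mul _
  have iA : Integrable (fun p : ℝ × ℝ =>
      (1 - t) * hEnt (W₀ p.1 p.2) + t * hEnt (W₁ p.1 p.2)) μsq := i0m.add i1m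
  have iC : Integrable (fun p : ℝ × ℝ =>
      2 * t * (1 - t) * (W₀ p.1 p.2 - W₁ p.1 p.2) ^ 2) μsq := iSq.const_mul _
  have hae : ∀ᵐ p ∂μsq, hEnt ((1 - t) * W₀ p.1 p.2 + t * W₁ p.1 p.2) ≤
      (1 - t) * hEnt (W₀ p.1 p.2) + t * hEnt (W₁ p.1 p.2)
        - 2 * t * (1 - t) * (W₀ p.1 p.2 - W₁ p.1 p.2) ^ 2 := by
    filter_upwards [a₀, a₁] with p hp0 hp1
    exact hEnt_strong hp0 hp1 ht
  have iR : Integrable (fun p : ℝ × ℝ =>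
      (1 - t) * hEnt (W₀ p.1 p.2) + t * hEnt (W₁ p.1 p.2)
        - 2 * t * (1 - t) * (W₀ p.1 p.2 - W₁ p.1 p.2) ^ 2) μsq := iA.sub iC
  have hle := integral_mono_ae iK iR hae
  rw [integral_sub iA iC, integral_add i0m i1m,
    integral_const_mul, integral_const_mul, integral_const_mul] at hle
  have hd2 : d2 W₀ W₁ ^ 2 = ∫ p, (W₀ p.1 p.2 - W₁ p.1 p.2) ^ 2 ∂μsq :=
    Real.sq_sqrt (integral_nonneg fun p => sq_nonneg _)
  rw [hd2]
  exact hle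

lemma entFun_ne_bot (V : ℝ → ℝ → ℝ) : EntFun V ≠ ⊥ := by
  unfold EntFun
  split_ifs
  · exact EReal.coe_ne_bot _
  · simp

lemma coe_mul_entFun_ne_bot {t : ℝ} (ht : 0 ≤ t) (V : ℝ → ℝ → ℝ) :
    ((t : ℝ) : EReal) * EntFun V ≠ ⊥ := by
  unfold EntFun
  split_ifs
  · rw [← EReal.coe_mul]
    exact EReal.coe_ne_bot _
  · rcases lt_or_eq_of_le ht with h | h
    · rw [EReal.coe_mul_top_of_pos h]
      simp
    · rw [← h]
      simp

end Aux

/-- The scalar entropy is `4`-semiconvex: `E` is `4`-semiconvex along `L²` line segments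
of `[0,1]`-valued kernels, and consequently the graphon functional `𝓔` is `4`-semiconvex
with respect to `δ₂` along every generalized geodesic of `(𝒲̂, δ₂)`. -/
theorem entropy_is_four_semiconvex :
    (∀ W₀ W₁ : ℝ → ℝ → ℝ, IsKernel W₀ → IsKernel W₁ →
      (∀ᵐ p ∂μsq, W₀ p.1 p.2 ∈ Set.Icc (0 : ℝ) 1) →
      (∀ᵐ p ∂μsq, W₁ p.1 p.2 ∈ Set.Icc (0 : ℝ) 1) →
      ∀ t ∈ Set.Icc (0 : ℝ) 1,
        entE (fun x y => (1 - t) * W₀ x y + t * W₁ x y) ≤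
          (1 - t) * entE W₀ + t * entE W₁ - 2 * t * (1 - t) * d2 W₀ W₁ ^ 2) ∧
    ∀ ω : ℝ → ℝ → ℝ → ℝ, IsGenGeodesic ω → SemiconvexAlong EntFun 4 ω := by
  constructor
  · exact fun W₀ W₁ h₀ h₁ a₀ a₁ t ht => entE_sc W₀ W₁ h₀ h₁ a₀ a₁ t ht
  · rintro ω ⟨W, W₀, W₁, φ, φ₀, φ₁, hW, hW₀, hW₁, hφ, hφ₀, hφ₁, -, -, hωdef⟩
    set A := pull W₀ φ₀ with hAdef
    set B := pull W₁ φ₁ with hBdef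
    have hA : IsKernel A := isKernel_pull hW₀ hφ₀
    have hB : IsKernel B := isKernel_pull hW₁ hφ₁
    have hω : ∀ t, ω t = fun x y => (1 - t) * A x y + t * B x y := by
      intro t; funext x y; exact hωdef t x y
    have hω0 : ω 0 = A := by funext x y; rw [hωdef]; ring
    have hω1 : ω 1 = B := by funext x y; rw [hωdef]; ring
    intro t ht
    obtain ⟨ht0, ht1⟩ := ht
    rcases eq_or_lt_of_le ht0 with h0 | h0
    · rw [← h0, hω0, hω1]
      norm_num
    rcases eq_or_lt_of_le ht1 with h1 | h1
    · rw [h1, hω0, hω1]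
      norm_num
    rw [hω0, hω1, hω t]
    by_cases hA01 : ∀ᵐ p ∂μsq, A p.1 p.2 ∈ Set.Icc (0 : ℝ) 1
    · by_cases hB01 : ∀ᵐ p ∂μsq, B p.1 p.2 ∈ Set.Icc (0 : ℝ) 1
      · -- good case
        have hM01 : ∀ᵐ p ∂μsq,
            (fun x y => (1 - t) * A x y + t * B x y) p.1 p.2 ∈ Set.Icc (0 : ℝ) 1 := by
          filter_upwards [hA01, hB01] with p hp0 hp1
          obtain ⟨u1, u2⟩ := hp0
          obtain ⟨v1, v2⟩ := hp1
          show (1 - t) * A p.1 p.2 + t * B p.1 p.2 ∈ Set.Icc (0 : ℝ) 1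
          constructor <;> nlinarith
        unfold EntFun
        rw [if_pos hM01, if_pos hA01, if_pos hB01,
          ← EReal.coe_mul, ← EReal.coe_mul, ← EReal.coe_add, ← EReal.coe_sub,
          EReal.coe_le_coe_iff]
        have hmain := entE_sc A B hA hB hA01 hB01 t ⟨ht0, ht1⟩
        have hδ : delta2 A B ≤ d2 A B := delta2_le_d2 A B
        have hδ0 : 0 ≤ delta2 A B := delta2_nonneg A B
        have hsq : delta2 A B ^ 2 ≤ d2 A B ^ 2 := by nlinarith
        nlinarith [hmain, mul_nonneg ht0 (by linarith : (0:ℝ) ≤ 1 - t), hsq]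
      · -- B bad
        have hFB : EntFun B = ⊤ := by unfold EntFun; rw [if_neg hB01]
        rw [hFB, EReal.coe_mul_top_of_pos h0]
        have hne : ((1 - t : ℝ) : EReal) * EntFun A ≠ ⊥ :=
          coe_mul_entFun_ne_bot (by linarith) A
        rw [EReal.add_top_of_ne_bot hne, EReal.top_sub_coe]
        exact le_top
    · -- A bad
      have hFA : EntFun A = ⊤ := by unfold EntFun; rw [if_neg hA01]
      rw [hFA, EReal.coe_mul_top_of_pos (by linarith : (0:ℝ) < 1 - t)]
      have hne : ((t : ℝ) : EReal) * EntFun B ≠ ⊥ := coe_mul_entFun_ne_bot ht0 B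
      rw [EReal.top_add_of_ne_bot hne, EReal.top_sub_coe]
      exact le_top


end
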